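/- Let k, l ∈ ℕ and let K be a compact subset of (0,2). Then there exist constants C > 0 and Y ≥ 1 such that for all α ∈ K and all y with |y| ≥ Y, |𝓘_α^{(k,l)}(y) − ψ_α^{(l)}(y) ∫_ℝ D^{(k)}(φ)(z) dz| ≤ C ψ_α^{(l)}(y)/√|y|. In particular (since ∫_ℝ φ(z) dz = 1), there exists C > 0 such that for all α ∈ K and all |y| > 1, |𝓘_α^{(0,l)}(y) − ψ_α^{(l)}(y)| ≤ C ψ_α^{(l)}(y)/√|y|. -/

import Mathlib

open MeasureTheory Filter Set Topology Matrix

noncomputable section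

namespace LevyLAN

/-- Standard Gaussian density `φ`. -/
def gauss (y : ℝ) : ℝ := (Real.sqrt (2 * Real.pi))⁻¹ * Real.exp (-(y ^ 2) / 2)

/-- Symmetric `α`-stable density `φ_α`, defined by Fourier inversion. -/
def stableDensity (α z : ℝ) : ℝ :=
  (2 * Real.pi)⁻¹ * ∫ u : ℝ, Real.cos (z * u) * Real.exp (-(|u| ^ α))

/-- `∂_α φ_α`. -/
def stableDensityDalpha (α z : ℝ) : ℝ :=
  -(2 * Real.pi)⁻¹ * ∫ u : ℝ, Real.cos (z * u) * |u| ^ α * Real.log |u| * Real.exp (-(|u| ^ α))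

/-- The operator `(D f) y = (y * f y)' = f y + y * f' y`. -/
def Dop (f : ℝ → ℝ) (y : ℝ) : ℝ := f y + y * deriv f y

/-- `f_α(y, w)`. -/
def fFun (α y w : ℝ) : ℝ := ∫ z : ℝ, gauss (y - w * z) * stableDensity α z

/-- `g_α(y, w)`. -/
def gFun (α y w : ℝ) : ℝ := ∫ z : ℝ, Dop gauss (y - w * z) * stableDensity α z

/-- `h_α(y, w)`. -/
def hFun (α y w : ℝ) : ℝ := ∫ z : ℝ, gauss (y - w * z) * Dop (stableDensity α) z

/-- `k_α(y, w)`. -/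
def kFun (α y w : ℝ) : ℝ := ∫ z : ℝ, gauss (y - w * z) * stableDensityDalpha α z

/-- `c_α`. -/
def cAlpha (α : ℝ) : ℝ :=
  if α = 1 then 1 / Real.pi
  else -(α * (α - 1)) / (2 * Real.Gamma (2 - α) * Real.cos (Real.pi * α / 2))

/-- `w_n(θ) = n^{1/2 - 1/α} δ / σ`. -/
def wn (n : ℕ) (σ δ α : ℝ) : ℝ := (n : ℝ) ^ ((1 : ℝ) / 2 - 1 / α) * δ / σ

/-- `l_α(y, w)` (it depends on `n`). -/
def lFun (n : ℕ) (α y w : ℝ) : ℝ :=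
  ((Real.log n - Real.log (Real.log n)) / (2 * α) - Real.log n / α ^ 2) * hFun α y w
    + kFun α y w

def kappa0 (σ δ α : ℝ) : ℝ := 2 * cAlpha α / (α * (2 - α) ^ (α / 2)) * (δ / σ) ^ α

def kappa1 (σ δ α : ℝ) : ℝ :=
  Real.log (δ / σ) + deriv cAlpha α / cAlpha α - Real.log (2 - α) / 2 - 1 / α

/-- The density `p_{1/n}(y, θ)`, with parameter `θ = (σ, δ, α) : Fin 3 → ℝ`. -/
def pdens (n : ℕ) (θ : Fin 3 → ℝ) (y : ℝ) : ℝ :=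
  Real.sqrt n / θ 0 * fFun (θ 2) (Real.sqrt n * y / θ 0) (wn n (θ 0) (θ 1) (θ 2))

/-- The log-likelihood `ln L_n(θ)`. -/
def logLik (n : ℕ) (θ : Fin 3 → ℝ) (x : Fin n → ℝ) : ℝ :=
  ∑ i, Real.log (pdens n θ (x i))

/-- Partial derivative in the `j`-th parameter coordinate. -/
def pderiv (j : Fin 3) (F : (Fin 3 → ℝ) → ℝ) (θ : Fin 3 → ℝ) : ℝ :=
  deriv (fun t => F (Function.update θ j t)) (θ j)

/-- The score `G_n(θ) = ∇_θ ln L_n(θ)`. -/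
def scoreVec (n : ℕ) (θ : Fin 3 → ℝ) (x : Fin n → ℝ) : Fin 3 → ℝ :=
  fun j => pderiv j (fun θ' => logLik n θ' x) θ

/-- The Hessian matrix `J_n(θ)` of the log-likelihood. -/
def hessMat (n : ℕ) (θ : Fin 3 → ℝ) (x : Fin n → ℝ) : Matrix (Fin 3) (Fin 3) ℝ :=
  Matrix.of fun i j => pderiv i (fun θ' => pderiv j (fun θ'' => logLik n θ'' x) θ') θ

def rate (n : ℕ) (α : ℝ) : ℝ := Real.log n ^ (α / 4) / (n : ℝ) ^ (α / 4)

/-- The rate matrix `u_n(θ)`. -/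
def un (n : ℕ) (θ : Fin 3 → ℝ) : Matrix (Fin 3) (Fin 3) ℝ :=
  !![1 / Real.sqrt n, 0, 0;
     0, rate n (θ 2), -(rate n (θ 2) * (θ 1 / (2 * θ 2)) * (Real.log n - Real.log (Real.log n)));
     0, 0, rate n (θ 2)]

/-- The information matrix `I(θ)`. -/
def Imat (θ : Fin 3 → ℝ) : Matrix (Fin 3) (Fin 3) ℝ :=
  !![2 / θ 0 ^ 2, 0, 0;
     0, θ 2 ^ 2 / θ 1 ^ 2 * kappa0 (θ 0) (θ 1) (θ 2),
        θ 2 / θ 1 * kappa0 (θ 0) (θ 1) (θ 2) * kappa1 (θ 0) (θ 1) (θ 2);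
     0, θ 2 / θ 1 * kappa0 (θ 0) (θ 1) (θ 2) * kappa1 (θ 0) (θ 1) (θ 2),
        kappa0 (θ 0) (θ 1) (θ 2) * (kappa1 (θ 0) (θ 1) (θ 2) ^ 2 + 1 / θ 2 ^ 2)]

/-- `ℙ_n`, the `n`-fold product of the law with Lebesgue density `p_{1/n}(·, θ)`. -/
def Pn (n : ℕ) (θ : Fin 3 → ℝ) : Measure (Fin n → ℝ) :=
  Measure.pi fun _ => MeasureTheory.volume.withDensity fun y => ENNReal.ofReal (pdens n θ y)

/-- The standard Gaussian measure on `ℝ³`. -/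
def stdGauss3 : Measure (Fin 3 → ℝ) :=
  Measure.pi fun _ => ProbabilityTheory.gaussianReal 0 1

/-- Euclidean (Frobenius) norm of a real 3×3 matrix. -/
def frobNorm (M : Matrix (Fin 3) (Fin 3) ℝ) : ℝ := Real.sqrt (∑ i, ∑ j, M i j ^ 2)

/-- Euclidean norm of a vector of `ℝ³`. -/
def vecNorm (v : Fin 3 → ℝ) : ℝ := Real.sqrt (∑ j, v j ^ 2)

/-- The admissible families of functions `ψ_α^{(p)}`. -/
structure IsPsiFamily (ψ : ℝ → ℕ → ℝ → ℝ) : Prop where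
  contDiff : ∀ α ∈ Set.Ioo (0 : ℝ) 2, ∀ p : ℕ, ContDiff ℝ 2 (ψ α p)
  pos : ∀ α ∈ Set.Ioo (0 : ℝ) 2, ∀ p : ℕ, ∀ y : ℝ, 0 < ψ α p y
  even : ∀ α ∈ Set.Ioo (0 : ℝ) 2, ∀ p : ℕ, ∀ y : ℝ, ψ α p (-y) = ψ α p y
  eq_one : ∀ α ∈ Set.Ioo (0 : ℝ) 2, ∀ p : ℕ, ∀ y : ℝ, |y| ≤ 1 → ψ α p y = 1
  eq_tail : ∀ α ∈ Set.Ioo (0 : ℝ) 2, ∀ p : ℕ, ∀ y : ℝ, 3 ≤ |y| →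
    ψ α p y = Real.log |y| ^ p / |y| ^ (α + 1)
  unifBound : ∀ K : Set ℝ, K ⊆ Set.Ioo (0 : ℝ) 2 → IsCompact K → ∀ p : ℕ,
    ∃ c > (0 : ℝ), ∃ C : ℝ, ∀ α ∈ K, ∀ y : ℝ, 1 ≤ |y| → |y| ≤ 3 →
      c ≤ ψ α p y ∧ ψ α p y ≤ C

/-- `𝓘_α^{(k,l)}`. -/
def Ical (ψ : ℝ → ℕ → ℝ → ℝ) (α : ℝ) (k l : ℕ) (y : ℝ) : ℝ :=
  ∫ z in {z : ℝ | 1 < |z|}, Dop^[k] gauss (y - z) * ψ α l z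

/-- `f_α^{(k,l,m)}`. -/
def fklm (α : ℝ) (k l m : ℕ) (y w : ℝ) : ℝ :=
  ∫ z : ℝ, Dop^[k] gauss (y - w * z)
    * Dop^[l] (fun z' => iteratedDeriv m (fun a => stableDensity a z') α) z

def Gamman (n : ℕ) (α : ℝ) : ℝ := Real.sqrt ((1 - α / 2) * Real.log n)

def Mn (n : ℕ) (α : ℝ) : ℝ := Real.sqrt ((2 - α) * Real.log n)

def Kconst (σ δ α : ℝ) : ℝ := deriv cAlpha α + cAlpha α * Real.log (δ / σ)

/-!
Write `𝓘(y) - ψ(y) ∫ D^{(k)}φ = ∫ D^{(k)}φ(y - z) (1_{|z|>1} ψ(z) - ψ(y)) dz`. Since `D^{(k)}φ` is a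
polynomial times `φ`, it is `O(exp (-u²/4))`. For `|z - y| ≤ √y` the explicit tail of `ψ` and the
mean value theorem give `|ψ(z) - ψ(y)| = O(ψ(y) |z - y| / y)`; for the other `z` we have
`(y - z)² ≥ y`, so the Gaussian factor contributes `exp (-y/8) = O(y^{-7/2}) = O(ψ(y) / √y)`,
because `ψ(y) ≥ y⁻³`. Negative `y` reduce to positive ones by reflecting the kernel. For
`1 < |y| < 6`, `|𝓘(y) - ψ(y)|` is bounded while `ψ(y) / √|y|` is bounded below.
-/

section Gaussian

open Polynomial Real

/-- `D(Hφ) = (H + X H' - X² H) φ`, so `D^{(k)} φ = H_k φ` for these polynomials. -/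
def gaussPoly : ℕ → ℝ[X]
  | 0 => 1
  | k + 1 => gaussPoly k + X * derivative (gaussPoly k) - X ^ 2 * gaussPoly k

lemma hasDerivAt_gauss (y : ℝ) : HasDerivAt gauss (-y * gauss y) y := by
  have hexponent : HasDerivAt (fun y : ℝ => -y ^ 2 / 2) (-y) y :=
    ((hasDerivAt_pow 2 y).neg.div_const 2).congr_deriv (by norm_num; ring)
  exact (hexponent.exp.const_mul (√(2 * π))⁻¹).congr_deriv (by unfold gauss; ring)

lemma gauss_eq_gaussianPDFReal : gauss = ProbabilityTheory.gaussianPDFReal 0 1 := by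
  ext y
  simp [gauss, ProbabilityTheory.gaussianPDFReal]

lemma gauss_nonneg (y : ℝ) : 0 ≤ gauss y := by
  rw [gauss_eq_gaussianPDFReal]
  exact ProbabilityTheory.gaussianPDFReal_nonneg 0 1 y

lemma integrable_gauss : Integrable gauss := by
  rw [gauss_eq_gaussianPDFReal]
  exact ProbabilityTheory.integrable_gaussianPDFReal 0 1

lemma integral_gauss : ∫ y, gauss y = 1 := by
  rw [gauss_eq_gaussianPDFReal]
  exact ProbabilityTheory.integral_gaussianPDFReal_eq_one 0 one_ne_zero

lemma iterate_Dop_gauss (k : ℕ) : Dop^[k] gauss = fun y => (gaussPoly k).eval y * gauss y := by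
  induction k with
  | zero => ext y; simp [gaussPoly]
  | succ k ih =>
    ext y
    have hderiv : HasDerivAt (fun y => (gaussPoly k).eval y * gauss y) _ y :=
      ((gaussPoly k).hasDerivAt y).mul (hasDerivAt_gauss y)
    rw [Function.iterate_succ_apply', ih, Dop, hderiv.deriv]
    simp only [gaussPoly, eval_add, eval_sub, eval_mul, eval_pow, eval_X]
    ring

lemma continuous_iterate_Dop_gauss (k : ℕ) : Continuous (Dop^[k] gauss) := by
  rw [iterate_Dop_gauss]
  exact (gaussPoly k).continuous.mul (by unfold gauss; fun_prop)

lemma abs_pow_le_exp_mul_exp (y : ℝ) (n : ℕ) : |y| ^ n ≤ exp ((n : ℝ) ^ 2) * exp (y ^ 2 / 4) :=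
  calc |y| ^ n ≤ exp |y| ^ n := by gcongr; linarith [add_one_le_exp |y|]
    _ = exp (n * |y|) := (exp_nat_mul _ _).symm
    _ ≤ exp ((n : ℝ) ^ 2 + y ^ 2 / 4) := by
        gcongr; nlinarith [sq_nonneg ((n : ℝ) - |y| / 2), sq_abs y]
    _ = exp ((n : ℝ) ^ 2) * exp (y ^ 2 / 4) := exp_add _ _

lemma exists_abs_eval_le_mul_exp (p : ℝ[X]) :
    ∃ B > 0, ∀ y, |p.eval y| ≤ B * exp (y ^ 2 / 4) := by
  induction p using Polynomial.induction_on' with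
  | add p q hp hq =>
    obtain ⟨Bp, hBp, hp⟩ := hp
    obtain ⟨Bq, hBq, hq⟩ := hq
    refine ⟨Bp + Bq, by positivity, fun y => ?_⟩
    rw [eval_add, add_mul]
    exact (abs_add_le _ _).trans (add_le_add (hp y) (hq y))
  | monomial n a =>
    refine ⟨(|a| + 1) * exp ((n : ℝ) ^ 2), by positivity, fun y => ?_⟩
    rw [eval_monomial, abs_mul, abs_pow, mul_assoc]
    exact mul_le_mul (by linarith) (abs_pow_le_exp_mul_exp y n) (by positivity) (by positivity)

lemma exists_abs_iterate_Dop_gauss_le (k : ℕ) :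
    ∃ B > 0, ∀ u, |Dop^[k] gauss u| ≤ B * exp (-u ^ 2 / 4) := by
  obtain ⟨B, hB0, hB⟩ := exists_abs_eval_le_mul_exp (gaussPoly k)
  refine ⟨B * (√(2 * π))⁻¹, by positivity, fun u => ?_⟩
  calc |Dop^[k] gauss u| = |(gaussPoly k).eval u| * gauss u := by
        rw [iterate_Dop_gauss, abs_mul, abs_of_nonneg (gauss_nonneg u)]
    _ ≤ B * exp (u ^ 2 / 4) * gauss u := mul_le_mul_of_nonneg_right (hB u) (gauss_nonneg u)
    _ = B * (√(2 * π))⁻¹ * exp (-u ^ 2 / 4) := by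
        rw [gauss, mul_left_comm, mul_assoc, mul_assoc, ← exp_add]
        ring_nf

end Gaussian

section PsiTail

open Real

def psiTail (α : ℝ) (p : ℕ) (t : ℝ) : ℝ := log t ^ p / t ^ (α + 1)

def psiTailDeriv (α : ℝ) (p : ℕ) (t : ℝ) : ℝ :=
  (p * log t ^ (p - 1) - (α + 1) * log t ^ p) / t ^ (α + 1) / t

variable {α : ℝ} {p : ℕ} {t : ℝ}

lemma one_le_log_of_three_le (ht : 3 ≤ t) : 1 ≤ log t := by
  rw [le_log_iff_exp_le (by linarith)]
  linarith [exp_one_lt_d9]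

lemma psiTail_le (hα : 0 < α) (ht : 1 ≤ t) : psiTail α p t ≤ (p + 1) ^ p := by
  have ht0 : 0 < t := by linarith
  set ε : ℝ := 1 / (p + 1) with hε
  have hlog : log t ≤ (p + 1) * t ^ ε := by
    calc log t ≤ t ^ ε / ε := log_le_rpow_div ht0.le (by positivity)
      _ = (p + 1) * t ^ ε := by rw [hε]; field_simp
  have hpow : (t ^ ε) ^ p ≤ t ^ (α + 1) := by
    rw [← rpow_natCast, ← rpow_mul ht0.le]
    refine rpow_le_rpow_of_exponent_le ht ?_
    have : ε * p ≤ 1 := by rw [hε, one_div_mul_eq_div, div_le_one (by positivity)]; linarith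
    linarith
  rw [psiTail, div_le_iff₀ (by positivity)]
  calc log t ^ p ≤ ((p + 1) * t ^ ε) ^ p := by gcongr; exact log_nonneg ht
    _ = (p + 1) ^ p * (t ^ ε) ^ p := mul_pow _ _ _
    _ ≤ (p + 1) ^ p * t ^ (α + 1) := by gcongr

lemma one_div_pow_three_le_psiTail (hα : α < 2) (ht : 3 ≤ t) : 1 / t ^ 3 ≤ psiTail α p t := by
  have ht1 : 1 ≤ t := by linarith
  have hexp : t ^ (α + 1) ≤ t ^ 3 := by
    rw [← rpow_natCast]
    exact rpow_le_rpow_of_exponent_le ht1 (by push_cast; linarith)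
  have hlog := one_le_pow₀ (n := p) (one_le_log_of_three_le ht)
  exact div_le_div₀ (by linarith) hlog (by positivity) hexp

lemma hasDerivAt_psiTail (α : ℝ) (p : ℕ) (ht : 0 < t) :
    HasDerivAt (psiTail α p) (psiTailDeriv α p t) t := by
  have hlog : HasDerivAt (fun x => log x ^ p) (p * log t ^ (p - 1) * t⁻¹) t :=
    (hasDerivAt_log ht.ne').pow p
  have hrpow := hasDerivAt_rpow_const (x := t) (p := α + 1) (Or.inl ht.ne')
  refine (hlog.div hrpow (rpow_pos_of_pos ht _).ne').congr_deriv ?_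
  rw [psiTailDeriv, rpow_sub_one ht.ne']
  have := rpow_pos_of_pos ht (α + 1)
  field_simp

lemma abs_psiTailDeriv_le (hα0 : 0 < α) (hα2 : α < 2) (ht : 3 ≤ t) :
    |psiTailDeriv α p t| ≤ (p + 3) * (psiTail α p t / t) := by
  have hlog := one_le_log_of_three_le ht
  have hnum : |p * log t ^ (p - 1) - (α + 1) * log t ^ p| ≤ (p + 3) * log t ^ p := by
    have hle : log t ^ (p - 1) ≤ log t ^ p := pow_le_pow_right₀ hlog (Nat.sub_le p 1)
    have : 0 ≤ log t ^ (p - 1) := by positivity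
    rw [abs_le]
    constructor <;> nlinarith [mul_le_mul_of_nonneg_left hle (Nat.cast_nonneg p : (0:ℝ) ≤ p)]
  have ht0 : 0 < t := by linarith
  rw [psiTailDeriv, abs_div, abs_div, abs_of_pos ht0, abs_of_pos (rpow_pos_of_pos ht0 _),
    psiTail]
  calc |p * log t ^ (p - 1) - (α + 1) * log t ^ p| / t ^ (α + 1) / t
      ≤ (p + 3) * log t ^ p / t ^ (α + 1) / t := by gcongr
    _ = (p + 3) * (log t ^ p / t ^ (α + 1) / t) := by ring

lemma psiTail_div_le (hα0 : 0 < α) (hα2 : α < 2) {y : ℝ} (hy : 2 ≤ y) (ht1 : y / 2 ≤ t)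
    (ht2 : t ≤ 3 * y / 2) : psiTail α p t / t ≤ 2 ^ (p + 4) * (psiTail α p y / y) := by
  have hy0 : 0 < y := by linarith
  have ht0 : 0 < t := by linarith
  have hlog : log t ^ p ≤ 2 ^ p * log y ^ p := by
    have hty : t ≤ y ^ 2 := by nlinarith
    calc log t ^ p ≤ log (y ^ 2) ^ p := by gcongr; exact log_nonneg (by linarith)
      _ = 2 ^ p * log y ^ p := by rw [log_pow, ← mul_pow]; norm_num
  have htwo : (2 : ℝ) ^ (α + 1) ≤ 8 := by
    calc (2 : ℝ) ^ (α + 1) ≤ 2 ^ (3 : ℝ) := rpow_le_rpow_of_exponent_le one_le_two (by linarith)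
      _ = 8 := by norm_num
  have hden : y ^ (α + 1) * y / 16 ≤ t ^ (α + 1) * t := by
    have hrpow : y ^ (α + 1) ≤ 8 * t ^ (α + 1) :=
      calc y ^ (α + 1) = 2 ^ (α + 1) * (y / 2) ^ (α + 1) := by
            rw [div_rpow hy0.le zero_le_two]; field_simp
        _ ≤ 8 * t ^ (α + 1) := by gcongr
    have : 0 ≤ y ^ (α + 1) := by positivity
    nlinarith
  rw [psiTail, psiTail, div_div, div_div]
  calc log t ^ p / (t ^ (α + 1) * t) ≤ 2 ^ p * log y ^ p / (y ^ (α + 1) * y / 16) :=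
        div_le_div₀ (by have := log_nonneg (by linarith : 1 ≤ y); positivity) hlog
          (by positivity) hden
    _ = 2 ^ (p + 4) * (log y ^ p / (y ^ (α + 1) * y)) := by
        rw [pow_add]; field_simp; norm_num

lemma abs_psiTail_sub_le (hα0 : 0 < α) (hα2 : α < 2) {y z : ℝ} (hy : 6 ≤ y)
    (hz : |z - y| ≤ y / 2) :
    |psiTail α p z - psiTail α p y| ≤ (p + 3) * 2 ^ (p + 4) * (psiTail α p y / y) * |z - y| := by
  set s := Icc (y / 2) (3 * y / 2)
  have hmem : ∀ {x}, |x - y| ≤ y / 2 → x ∈ s := fun hx => by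
    constructor <;> linarith [abs_le.1 hx]
  have hderiv : ∀ t ∈ s, HasDerivWithinAt (psiTail α p) (psiTailDeriv α p t) s t :=
    fun t ht => (hasDerivAt_psiTail α p (by linarith [ht.1])).hasDerivWithinAt
  have hbound : ∀ t ∈ s, ‖psiTailDeriv α p t‖ ≤ (p + 3) * 2 ^ (p + 4) * (psiTail α p y / y) :=
    fun t ht =>
    calc ‖psiTailDeriv α p t‖ ≤ (p + 3) * (psiTail α p t / t) :=
          abs_psiTailDeriv_le hα0 hα2 (by linarith [ht.1])
      _ ≤ (p + 3) * (2 ^ (p + 4) * (psiTail α p y / y)) := by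
          gcongr; exact psiTail_div_le hα0 hα2 (by linarith) ht.1 ht.2
      _ = _ := by ring
  exact (convex_Icc _ _).norm_image_sub_le_of_norm_hasDerivWithin_le hderiv hbound
    (hmem (by rw [sub_self, abs_zero]; linarith)) (hmem hz)

end PsiTail

section Kernel

open Real

lemma integrable_exp_neg_sq_div {c : ℝ} (hc : 0 < c) :
    Integrable (fun u : ℝ => exp (-u ^ 2 / c)) := by
  convert integrable_exp_neg_mul_sq (one_div_pos.2 hc) using 3 with u
  ring

lemma integral_exp_neg_sq_div {c : ℝ} (hc : 0 < c) : ∫ u : ℝ, exp (-u ^ 2 / c) = √(π * c) := by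
  convert integral_gaussian (1 / c) using 3 with u
  · congr 1; ring
  · field_simp

lemma abs_mul_exp_neg_sq_div_four_le (u : ℝ) :
    |u| * exp (-u ^ 2 / 4) ≤ exp 2 * exp (-u ^ 2 / 8) := by
  rw [← exp_add]
  calc |u| * exp (-u ^ 2 / 4) ≤ exp |u| * exp (-u ^ 2 / 4) := by
        gcongr; linarith [add_one_le_exp |u|]
    _ = exp (|u| - u ^ 2 / 4) := by rw [← exp_add]; ring_nf
    _ ≤ exp (2 + -u ^ 2 / 8) := by gcongr; nlinarith [sq_nonneg (|u| - 4), sq_abs u]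

lemma pow_four_mul_exp_neg_le {y : ℝ} (hy : 0 ≤ y) : y ^ 4 * exp (-(y / 8)) ≤ 32 ^ 4 := by
  have hlin : y ≤ 32 * exp (y / 32) := by linarith [add_one_le_exp (y / 32)]
  calc y ^ 4 * exp (-(y / 8)) ≤ (32 * exp (y / 32)) ^ 4 * exp (-(y / 8)) := by gcongr
    _ = 32 ^ 4 * (exp (y / 32) ^ 4 * exp (-(y / 8))) := by ring
    _ = 32 ^ 4 := by rw [← exp_nat_mul, ← exp_add]; ring_nf; simp

lemma exp_neg_div_eight_le {y a : ℝ} (hy : 1 ≤ y) (ha : 1 / y ^ 3 ≤ a) :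
    exp (-(y / 8)) ≤ 32 ^ 4 * (a / √y) :=
  calc exp (-(y / 8)) ≤ 32 ^ 4 / y ^ 4 := by
        rw [le_div_iff₀ (by positivity), mul_comm]
        exact pow_four_mul_exp_neg_le (by linarith)
    _ = 32 ^ 4 * (1 / y ^ 3 / y) := by field_simp
    _ ≤ 32 ^ 4 * (a / √y) := by
        gcongr
        · exact (by positivity : (0 : ℝ) ≤ 1 / y ^ 3).trans ha
        · exact sqrt_le_iff.2 ⟨by linarith, by nlinarith⟩

variable {κ P : ℝ → ℝ} {B L M y : ℝ}

lemma abs_indicator_sub_le (s : Set ℝ) (hP0 : ∀ z, 0 ≤ P z) (hPM : ∀ z, P z ≤ M) (y z : ℝ) :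
    |s.indicator P z - P y| ≤ M := by
  have h0 : 0 ≤ s.indicator P z := indicator_nonneg (fun z _ => hP0 z) z
  have hle : s.indicator P z ≤ M := by
    by_cases hz : z ∈ s
    · rw [indicator_of_mem hz]; exact hPM z
    · rw [indicator_of_notMem hz]; exact (hP0 y).trans (hPM y)
  exact abs_sub_le_iff.2 ⟨by linarith [hP0 y], by linarith [hPM y]⟩

lemma integrable_of_abs_le_exp (hκ : Continuous κ) (hκB : ∀ u, |κ u| ≤ B * exp (-u ^ 2 / 4)) :
    Integrable κ :=
  ((integrable_exp_neg_sq_div four_pos).const_mul B).mono' hκ.aestronglyMeasurable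
    (ae_of_all _ hκB)

lemma abs_kernel_mul_indicator_sub_le (hκB : ∀ u, |κ u| ≤ B * exp (-u ^ 2 / 4)) (hL : 0 ≤ L)
    (hP0 : ∀ z, 0 ≤ P z) (hPM : ∀ z, P z ≤ M) (hy : 4 ≤ y) (hPy : 1 / y ^ 3 ≤ P y)
    (hPL : ∀ z, |z - y| ≤ √y → |P z - P y| ≤ L * (P y / y) * |z - y|) (z : ℝ) :
    |κ (y - z) * ({z : ℝ | 1 < |z|}.indicator P z - P y)|
      ≤ (L * exp 2 + 32 ^ 4 * M) * B * (P y / √y) * exp (-(y - z) ^ 2 / 8) := by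
  have hB : 0 ≤ B := by simpa using (abs_nonneg _).trans (hκB 0)
  have hM : 0 ≤ M := (hP0 y).trans (hPM y)
  have hsqrt : 0 < √y := sqrt_pos.2 (by linarith)
  have hsqrt_le : √y ≤ y / 2 := sqrt_le_iff.2 ⟨by linarith, by nlinarith⟩
  have hratio : 0 ≤ P y / √y := div_nonneg (hP0 y) hsqrt.le
  rw [abs_mul]
  by_cases hz : |z - y| ≤ √y
  · have hzE : z ∈ {z : ℝ | 1 < |z|} := by
      show 1 < |z|
      linarith [abs_le.1 hz, le_abs_self z]
    rw [indicator_of_mem hzE]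
    calc |κ (y - z)| * |P z - P y|
        ≤ B * exp (-(y - z) ^ 2 / 4) * (L * (P y / y) * |z - y|) :=
          mul_le_mul (hκB _) (hPL z hz) (abs_nonneg _) (by positivity)
      _ = L * B * (P y / y) * (|y - z| * exp (-(y - z) ^ 2 / 4)) := by
          rw [abs_sub_comm]; ring
      _ ≤ L * B * (P y / √y) * (exp 2 * exp (-(y - z) ^ 2 / 8)) := by
          have hdiv : P y / y ≤ P y / √y :=
            div_le_div_of_nonneg_left (hP0 y) hsqrt (by linarith)
          exact mul_le_mul (mul_le_mul_of_nonneg_left hdiv (by positivity))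
            (abs_mul_exp_neg_sq_div_four_le _) (by positivity) (by positivity)
      _ ≤ _ := by
          have : 0 ≤ 32 ^ 4 * M * B * (P y / √y) * exp (-(y - z) ^ 2 / 8) := by positivity
          linarith
  · have hfar : y ≤ (y - z) ^ 2 := by
      have h := pow_le_pow_left₀ (sqrt_nonneg y) (not_le.1 hz).le 2
      rwa [sq_sqrt (by linarith), sq_abs, ← neg_sub, neg_sq] at h
    calc |κ (y - z)| * |{z : ℝ | 1 < |z|}.indicator P z - P y|
        ≤ B * exp (-(y - z) ^ 2 / 4) * M :=
          mul_le_mul (hκB _) (abs_indicator_sub_le _ hP0 hPM y z) (abs_nonneg _) (by positivity)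
      _ ≤ B * (exp (-(y / 8)) * exp (-(y - z) ^ 2 / 8)) * M := by
          rw [← exp_add]; gcongr; linarith
      _ ≤ B * (32 ^ 4 * (P y / √y) * exp (-(y - z) ^ 2 / 8)) * M := by
          gcongr; exact exp_neg_div_eight_le (by linarith) hPy
      _ ≤ _ := by
          have : 0 ≤ L * exp 2 * B * (P y / √y) * exp (-(y - z) ^ 2 / 8) := by positivity
          linarith

lemma abs_setIntegral_kernel_mul_sub_le (hκ : Continuous κ)
    (hκB : ∀ u, |κ u| ≤ B * exp (-u ^ 2 / 4)) (hP : Continuous P) (hL : 0 ≤ L)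
    (hP0 : ∀ z, 0 ≤ P z) (hPM : ∀ z, P z ≤ M) (hy : 4 ≤ y) (hPy : 1 / y ^ 3 ≤ P y)
    (hPL : ∀ z, |z - y| ≤ √y → |P z - P y| ≤ L * (P y / y) * |z - y|) :
    |(∫ z in {z : ℝ | 1 < |z|}, κ (y - z) * P z) - P y * ∫ u, κ u|
      ≤ (L * exp 2 + 32 ^ 4 * M) * B * √(π * 8) * (P y / √y) := by
  set E := {z : ℝ | 1 < |z|}
  have hE : MeasurableSet E := measurableSet_lt measurable_const continuous_abs.measurable
  have hκy : Integrable (fun z => κ (y - z)) :=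
    (integrable_of_abs_le_exp hκ hκB).comp_sub_left y
  have hκP : Integrable (fun z => κ (y - z) * E.indicator P z) :=
    hκy.mul_bdd (hP.aestronglyMeasurable.indicator hE) (ae_of_all _ fun z =>
      (norm_indicator_le_norm_self P z).trans (by rw [norm_of_nonneg (hP0 z)]; exact hPM z))
  have hsplit : (∫ z in E, κ (y - z) * P z) - P y * ∫ u, κ u
      = ∫ z, κ (y - z) * (E.indicator P z - P y) := by
    have hset : ∫ z in E, κ (y - z) * P z = ∫ z, κ (y - z) * E.indicator P z := by
      rw [← integral_indicator hE]
      congr 1 with z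
      exact indicator_mul_right E (fun z => κ (y - z)) P
    rw [hset, ← integral_sub_left_eq_self κ volume y, ← integral_const_mul,
      ← integral_sub hκP (hκy.const_mul _)]
    congr 1 with z
    ring
  have hgauss : Integrable (fun z => exp (-(y - z) ^ 2 / 8)) :=
    (integrable_exp_neg_sq_div (by norm_num)).comp_sub_left y
  rw [hsplit, ← norm_eq_abs]
  calc ‖∫ z, κ (y - z) * (E.indicator P z - P y)‖
      ≤ ∫ z, (L * exp 2 + 32 ^ 4 * M) * B * (P y / √y) * exp (-(y - z) ^ 2 / 8) :=
        norm_integral_le_of_norm_le (hgauss.const_mul _)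
          (ae_of_all _ (abs_kernel_mul_indicator_sub_le hκB hL hP0 hPM hy hPy hPL))
    _ = _ := by
        rw [integral_const_mul, integral_sub_left_eq_self (fun u => exp (-u ^ 2 / 8)),
          integral_exp_neg_sq_div (by norm_num)]
        ring

lemma setIntegral_kernel_mul_eq_neg (hP : ∀ z, P (-z) = P z) (y : ℝ) :
    ∫ z in {z : ℝ | 1 < |z|}, κ (y - z) * P z
      = ∫ z in {z : ℝ | 1 < |z|}, κ (-(-y - z)) * P z := by
  have hE : MeasurableSet {z : ℝ | 1 < |z|} :=
    measurableSet_lt measurable_const continuous_abs.measurable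
  rw [← integral_indicator hE, ← integral_indicator hE, ← integral_neg_eq_self]
  congr 1 with z
  simp only [indicator, mem_ofPred_eq, abs_neg, hP]
  ring_nf

lemma abs_setIntegral_kernel_mul_le (hκ : Integrable κ) (hPM : ∀ z, |P z| ≤ M) (s : Set ℝ)
    (y : ℝ) : |∫ z in s, κ (y - z) * P z| ≤ M * ∫ u, |κ u| := by
  have hM : 0 ≤ M := (abs_nonneg _).trans (hPM 0)
  have hbound : Integrable (fun z => M * |κ (y - z)|) := (hκ.abs.comp_sub_left y).const_mul M
  rw [← norm_eq_abs]
  calc ‖∫ z in s, κ (y - z) * P z‖ ≤ ∫ z in s, M * |κ (y - z)| :=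
        norm_integral_le_of_norm_le hbound.integrableOn (ae_of_all _ fun z => by
          rw [norm_mul, norm_eq_abs, norm_eq_abs, mul_comm]
          exact mul_le_mul_of_nonneg_right (hPM z) (abs_nonneg _))
    _ ≤ ∫ z, M * |κ (y - z)| := setIntegral_le_integral hbound (ae_of_all _ fun z => by positivity)
    _ = M * ∫ u, |κ u| := by
        rw [integral_const_mul, integral_sub_left_eq_self (fun u => |κ u|)]

end Kernel

namespace IsPsiFamily

open Real

variable {ψ : ℝ → ℕ → ℝ → ℝ} {K : Set ℝ} {α : ℝ}

lemma eq_psiTail (hψ : IsPsiFamily ψ) (hα : α ∈ Ioo 0 2) (p : ℕ) {y : ℝ} (hy : 3 ≤ y) :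
    ψ α p y = psiTail α p y := by
  have hy' : |y| = y := abs_of_pos (by linarith)
  rw [hψ.eq_tail α hα p y (hy'.symm ▸ hy), hy', psiTail]

lemma one_div_pow_three_le (hψ : IsPsiFamily ψ) (hα : α ∈ Ioo 0 2) (p : ℕ) {y : ℝ}
    (hy : 3 ≤ |y|) : 1 / |y| ^ 3 ≤ ψ α p y := by
  rw [hψ.eq_tail α hα p y hy]
  exact one_div_pow_three_le_psiTail hα.2 hy

lemma abs_sub_le (hψ : IsPsiFamily ψ) (hα : α ∈ Ioo 0 2) (p : ℕ) {y z : ℝ} (hy : 6 ≤ y)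
    (hz : |z - y| ≤ y / 2) :
    |ψ α p z - ψ α p y| ≤ (p + 3) * 2 ^ (p + 4) * (ψ α p y / y) * |z - y| := by
  rw [hψ.eq_psiTail hα p (by linarith [abs_le.1 hz]), hψ.eq_psiTail hα p (by linarith)]
  exact abs_psiTail_sub_le hα.1 hα.2 hy hz

lemma exists_le (hψ : IsPsiFamily ψ) (hK : IsCompact K) (hKsub : K ⊆ Ioo 0 2) (p : ℕ) :
    ∃ M > 0, ∀ α ∈ K, ∀ y, ψ α p y ≤ M := by
  obtain ⟨c, -, C, hC⟩ := hψ.unifBound K hKsub hK p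
  refine ⟨max (max 1 C) ((p + 1) ^ p), by positivity, fun α hα y => ?_⟩
  rcases le_or_gt |y| 1 with h1 | h1
  · rw [hψ.eq_one α (hKsub hα) p y h1]
    exact (le_max_left _ _).trans (le_max_left _ _)
  rcases le_or_gt |y| 3 with h3 | h3
  · exact (hC α hα y h1.le h3).2.trans ((le_max_right _ _).trans (le_max_left _ _))
  · rw [hψ.eq_tail α (hKsub hα) p y h3.le]
    exact (psiTail_le (hKsub hα).1 (by linarith)).trans (le_max_right _ _)

lemma exists_pos_le (hψ : IsPsiFamily ψ) (hK : IsCompact K) (hKsub : K ⊆ Ioo 0 2) (p : ℕ)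
    (R : ℝ) : ∃ c > 0, ∀ α ∈ K, ∀ y, 1 ≤ |y| → |y| ≤ R → c ≤ ψ α p y := by
  obtain ⟨c, hc, C, hC⟩ := hψ.unifBound K hKsub hK p
  refine ⟨min c (1 / max R 3 ^ 3), by positivity, fun α hα y h1 hR => ?_⟩
  rcases le_or_gt |y| 3 with h3 | h3
  · exact (min_le_left _ _).trans (hC α hα y h1 h3).1
  · calc min c (1 / max R 3 ^ 3) ≤ 1 / |y| ^ 3 := (min_le_right _ _).trans (by
          gcongr; exact hR.trans (le_max_left _ _))
      _ ≤ ψ α p y := hψ.one_div_pow_three_le (hKsub hα) p h3.le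

lemma abs_setIntegral_kernel_mul_sub_le (hψ : IsPsiFamily ψ) (hα : α ∈ Ioo 0 2) (l : ℕ)
    {κ : ℝ → ℝ} {B M y : ℝ} (hκ : Continuous κ) (hκB : ∀ u, |κ u| ≤ B * exp (-u ^ 2 / 4))
    (hM : ∀ z, ψ α l z ≤ M) (hy : 6 ≤ y) :
    |(∫ z in {z : ℝ | 1 < |z|}, κ (y - z) * ψ α l z) - ψ α l y * ∫ u, κ u|
      ≤ ((l + 3) * 2 ^ (l + 4) * exp 2 + 32 ^ 4 * M) * B * √(π * 8) * (ψ α l y / √y) := by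
  have hy' : |y| = y := abs_of_pos (by linarith)
  refine LevyLAN.abs_setIntegral_kernel_mul_sub_le hκ hκB (hψ.contDiff α hα l).continuous
    (by positivity) (fun z => (hψ.pos α hα l z).le) hM (by linarith) ?_ fun z hz => ?_
  · simpa only [hy'] using hψ.one_div_pow_three_le hα l (y := y) (by linarith)
  · exact hψ.abs_sub_le hα l hy (hz.trans (sqrt_le_iff.2 ⟨by linarith, by nlinarith⟩))

end IsPsiFamily

section Ical

open Real

variable {ψ : ℝ → ℕ → ℝ → ℝ} {K : Set ℝ}

lemma exists_abs_Ical_sub_le (hK : IsCompact K) (hKsub : K ⊆ Ioo 0 2) (hψ : IsPsiFamily ψ)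
    (k l : ℕ) : ∃ C > 0, ∀ α ∈ K, ∀ y, 6 ≤ |y| →
      |Ical ψ α k l y - ψ α l y * ∫ z, Dop^[k] gauss z| ≤ C * ψ α l y / √|y| := by
  obtain ⟨B, hB0, hB⟩ := exists_abs_iterate_Dop_gauss_le k
  obtain ⟨M, hM0, hM⟩ := hψ.exists_le hK hKsub l
  refine ⟨((l + 3) * 2 ^ (l + 4) * exp 2 + 32 ^ 4 * M) * B * √(π * 8), by positivity,
    fun α hα y hy => ?_⟩
  rw [mul_div_assoc]
  rcases le_or_gt 0 y with hy0 | hy0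
  · rw [abs_of_nonneg hy0] at hy ⊢
    exact hψ.abs_setIntegral_kernel_mul_sub_le (hKsub hα) l (continuous_iterate_Dop_gauss k) hB
      (hM α hα) hy
  · rw [abs_of_neg hy0] at hy ⊢
    have h := hψ.abs_setIntegral_kernel_mul_sub_le (hKsub hα) l (κ := fun u => Dop^[k] gauss (-u))
      ((continuous_iterate_Dop_gauss k).comp continuous_neg) (fun u => by simpa using hB (-u))
      (hM α hα) hy
    beta_reduce at h
    rwa [integral_neg_eq_self, hψ.even α (hKsub hα) l,
      ← setIntegral_kernel_mul_eq_neg (hψ.even α (hKsub hα) l)] at h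

lemma exists_abs_Ical_zero_sub_le (hK : IsCompact K) (hKsub : K ⊆ Ioo 0 2)
    (hψ : IsPsiFamily ψ) (l : ℕ) : ∃ C > 0, ∀ α ∈ K, ∀ y, 1 < |y| →
      |Ical ψ α 0 l y - ψ α l y| ≤ C * ψ α l y / √|y| := by
  obtain ⟨C, hC, hfar⟩ := exists_abs_Ical_sub_le hK hKsub hψ 0 l
  obtain ⟨M, hM0, hM⟩ := hψ.exists_le hK hKsub l
  obtain ⟨c, hc, hc'⟩ := hψ.exists_pos_le hK hKsub l 6
  refine ⟨max C (2 * M * √6 / c), by positivity, fun α hα y hy => ?_⟩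
  have hψy := hψ.pos α (hKsub hα) l y
  have hsqrt : 0 < √|y| := sqrt_pos.2 (by linarith)
  rcases le_or_gt 6 |y| with hy6 | hy6
  · calc |Ical ψ α 0 l y - ψ α l y| ≤ C * ψ α l y / √|y| := by
          simpa [integral_gauss] using hfar α hα y hy6
      _ ≤ _ := by gcongr; exact le_max_left _ _
  · have hIcal : |Ical ψ α 0 l y| ≤ M := by
      have h := abs_setIntegral_kernel_mul_le integrable_gauss
        (fun z => (abs_of_pos (hψ.pos α (hKsub hα) l z)).trans_le (hM α hα z))
        {z : ℝ | 1 < |z|} y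
      simp_rw [abs_of_nonneg (gauss_nonneg _), integral_gauss, mul_one] at h
      exact h
    calc |Ical ψ α 0 l y - ψ α l y| ≤ 2 * M := by
          have := hM α hα y
          rw [abs_le] at hIcal ⊢; constructor <;> linarith
      _ = 2 * M * √6 / c * (c / √6) := by field_simp
      _ ≤ max C (2 * M * √6 / c) * (ψ α l y / √|y|) := by
          gcongr
          · exact le_max_right _ _
          · exact hc' α hα y hy.le hy6.le
      _ = _ := (mul_div_assoc _ _ _).symm

end Ical

/-- asymptotic expansion of `𝓘_α^{(k,l)}`, uniformly for `α` in a compact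
subset of `(0,2)`. -/
theorem statement5 (k l : ℕ) (K : Set ℝ) (hK : IsCompact K) (hKsub : K ⊆ Set.Ioo (0 : ℝ) 2)
    (ψ : ℝ → ℕ → ℝ → ℝ) (hψ : IsPsiFamily ψ) :
    (∃ C > (0 : ℝ), ∃ Y : ℝ, 1 ≤ Y ∧ ∀ α ∈ K, ∀ y : ℝ, Y ≤ |y| →
      |Ical ψ α k l y - ψ α l y * ∫ z : ℝ, Dop^[k] gauss z| ≤
        C * ψ α l y / Real.sqrt |y|) ∧
    (∃ C > (0 : ℝ), ∀ α ∈ K, ∀ y : ℝ, 1 < |y| →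
      |Ical ψ α 0 l y - ψ α l y| ≤ C * ψ α l y / Real.sqrt |y|) := by
  obtain ⟨C, hC, hfar⟩ := exists_abs_Ical_sub_le hK hKsub hψ k l
  exact ⟨⟨C, hC, 6, by norm_num, hfar⟩, exists_abs_Ical_zero_sub_le hK hKsub hψ l⟩

end LevyLAN
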